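/- arXiv:1308.1185 — 2 statements merged into one kernel-verified Lean document; each statement's English description precedes it below -/
import Mathlib

section
/- Let l ≥ 1 and let n_1,...,n_l > 1 be integers with n = n_1 + ⋯ + n_l. Then ϑ(n) ≤ (ϑ(n_1)⁻¹ + ⋯ + ϑ(n_l)⁻¹)⁻¹. -/
noncomputable def theta (n : ℕ) : ℝ :=
  (1 / 2) * (((n / 2 : ℕ) : ℝ)⁻¹ + (((n + 1) / 2 : ℕ) : ℝ)⁻¹)

/-! With `a = ⌊n/2⌋` and `b = ⌈n/2⌉` we have `a + b = n` and `4ab = n² - (n % 2)`, so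
`ϑ(n)⁻¹ = 2ab/n = n/2 - (n % 2)/(2n)`. Hence `∑ ϑ(nⱼ)⁻¹ ≤ ϑ(n)⁻¹` reduces to the subadditivity of
the parity defect `(k % 2)/(2k)`: if `n` is odd, some `nⱼ ≤ n` is odd, and its defect `1/(2nⱼ)` is already
at least `1/(2n)`. -/

noncomputable def parityDefect (n : ℕ) : ℝ := ((n % 2 : ℕ) : ℝ) / (2 * n)

lemma parityDefect_nonneg (n : ℕ) : 0 ≤ parityDefect n := by
  unfold parityDefect
  positivity

lemma parityDefect_sum_le {ι : Type*} (s : Finset ι) (m : ι → ℕ) :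
    parityDefect (∑ j ∈ s, m j) ≤ ∑ j ∈ s, parityDefect (m j) := by
  rcases Nat.even_or_odd (∑ j ∈ s, m j) with h | h
  · rw [parityDefect, Nat.even_iff.mp h, Nat.cast_zero, zero_div]
    exact Finset.sum_nonneg fun j _ => parityDefect_nonneg (m j)
  · obtain ⟨j₀, hj₀, hodd⟩ : ∃ j ∈ s, Odd (m j) := by
      by_contra! hc
      exact Nat.not_odd_iff_even.mpr (Finset.even_sum _ fun j hj => Nat.not_odd_iff_even.mp (hc j hj)) h
    have hle : (m j₀ : ℝ) ≤ ∑ j ∈ s, (m j : ℝ) := by exact_mod_cast Finset.single_le_sum (by simp) hj₀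
    have hpos : (0 : ℝ) < m j₀ := by exact_mod_cast hodd.pos
    calc parityDefect (∑ j ∈ s, m j) = 1 / (2 * ∑ j ∈ s, (m j : ℝ)) := by
          rw [parityDefect, Nat.odd_iff.mp h]; push_cast; rfl
      _ ≤ 1 / (2 * m j₀) := by gcongr
      _ = parityDefect (m j₀) := by rw [parityDefect, Nat.odd_iff.mp hodd]; push_cast; rfl
      _ ≤ ∑ j ∈ s, parityDefect (m j) :=
          Finset.single_le_sum (fun j _ => parityDefect_nonneg (m j)) hj₀

lemma theta_pos {n : ℕ} (hn : 2 ≤ n) : 0 < theta n := by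
  have ha : (0 : ℝ) < (n / 2 : ℕ) := by exact_mod_cast Nat.div_pos hn two_pos
  have hb : (0 : ℝ) < ((n + 1) / 2 : ℕ) := by exact_mod_cast Nat.div_pos (by omega) two_pos
  unfold theta
  positivity

lemma theta_inv_eq {n : ℕ} (hn : 2 ≤ n) : (theta n)⁻¹ = n / 2 - parityDefect n := by
  have ha : (0 : ℝ) < (n / 2 : ℕ) := by exact_mod_cast Nat.div_pos hn two_pos
  have hb : (0 : ℝ) < ((n + 1) / 2 : ℕ) := by exact_mod_cast Nat.div_pos (by omega) two_pos
  have hsum : ((n / 2 : ℕ) : ℝ) + ((n + 1) / 2 : ℕ) = n := by norm_cast; omega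
  have hdiff : (((n + 1) / 2 : ℕ) : ℝ) = (n / 2 : ℕ) + (n % 2 : ℕ) := by norm_cast; omega
  have hsq : ((n % 2 : ℕ) : ℝ) ^ 2 = (n % 2 : ℕ) := by
    norm_cast
    rcases Nat.mod_two_eq_zero_or_one n with h | h <;> simp [h]
  have hn0 : (0 : ℝ) < n := by rw [← hsum]; positivity
  rw [theta, parityDefect]
  field_simp
  rw [← hsum, hdiff]
  linear_combination (-(2 * ((n / 2 : ℕ) : ℝ) + (n % 2 : ℕ))) * hsq

lemma sum_theta_inv_le {ι : Type*} {s : Finset ι} (hs : s.Nonempty) {m : ι → ℕ}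
    (hm : ∀ j ∈ s, 2 ≤ m j) : ∑ j ∈ s, (theta (m j))⁻¹ ≤ (theta (∑ j ∈ s, m j))⁻¹ := by
  obtain ⟨j₀, hj₀⟩ := hs
  have hn : 2 ≤ ∑ j ∈ s, m j := (hm j₀ hj₀).trans (Finset.single_le_sum (by simp) hj₀)
  rw [theta_inv_eq hn, Finset.sum_congr rfl fun j hj => theta_inv_eq (hm j hj),
    Finset.sum_sub_distrib, ← Finset.sum_div, Nat.cast_sum]
  linarith [parityDefect_sum_le s m]

theorem stmt_4 (l : ℕ) (hl : 1 ≤ l) (m : Fin l → ℕ) (hm : ∀ j, 1 < m j) :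
    theta (∑ j, m j) ≤ (∑ j, (theta (m j))⁻¹)⁻¹ := by
  have hne : (Finset.univ : Finset (Fin l)).Nonempty := ⟨⟨0, hl⟩, Finset.mem_univ _⟩
  have hS : 0 < ∑ j, (theta (m j))⁻¹ :=
    Finset.sum_pos (fun j _ => inv_pos.mpr (theta_pos (hm j))) hne
  simpa using inv_anti₀ hS (sum_theta_inv_le hne fun j _ => hm j)
end

section
/- Let l > 1 and let n_1,...,n_l > 1 be integers with n = n_1 + ⋯ + n_l. Then ϑ(n) = (ϑ(n_1)⁻¹ + ⋯ + ϑ(n_l)⁻¹)⁻¹ if and only if all of n_1,...,n_l are even. -/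
open Finset

noncomputable def thetaDefect (n : ℕ) : ℝ :=
  if Odd n then (2 * n : ℝ)⁻¹ else 0

lemma thetaDefect_nonneg (n : ℕ) : 0 ≤ thetaDefect n := by
  unfold thetaDefect
  split <;> positivity

lemma thetaDefect_of_even {n : ℕ} (hn : Even n) : thetaDefect n = 0 :=
  if_neg (Nat.not_odd_iff_even.mpr hn)

lemma thetaDefect_lt_of_odd_of_lt {a b : ℕ} (ha : Odd a) (hab : a < b) :
    thetaDefect b < thetaDefect a := by
  have ha_pos : (0 : ℝ) < a := by exact_mod_cast ha.pos
  have hab' : (a : ℝ) < b := by exact_mod_cast hab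
  rw [thetaDefect, thetaDefect, if_pos ha]
  split
  · gcongr
  · positivity

lemma inv_theta_eq {n : ℕ} (hn : 2 ≤ n) : (theta n)⁻¹ = n / 2 - thetaDefect n := by
  rcases Nat.even_or_odd' n with ⟨k, rfl | rfl⟩
  · have hk : (k : ℝ) ≠ 0 := by norm_cast; omega
    rw [theta, thetaDefect_of_even (even_two_mul k),
      show 2 * k / 2 = k by omega, show (2 * k + 1) / 2 = k by omega]
    push_cast
    field_simp
    ring
  · have hk : (k : ℝ) ≠ 0 := by norm_cast; omega
    have hn' : (2 * k + 1 : ℝ) ≠ 0 := by positivity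
    rw [theta, thetaDefect, if_pos (odd_two_mul_add_one k),
      show (2 * k + 1) / 2 = k by omega, show (2 * k + 1 + 1) / 2 = k + 1 by omega]
    push_cast
    field_simp
    ring

variable {ι : Type*} [Fintype ι]

lemma theta_sum_eq_iff_thetaDefect_sum_eq [Nonempty ι] {m : ι → ℕ} (hm : ∀ j, 2 ≤ m j) :
    theta (∑ j, m j) = (∑ j, (theta (m j))⁻¹)⁻¹ ↔
      thetaDefect (∑ j, m j) = ∑ j, thetaDefect (m j) := by
  obtain ⟨j⟩ := ‹Nonempty ι›
  have hsum : 2 ≤ ∑ j, m j := (hm j).trans (single_le_sum (fun _ _ ↦ Nat.zero_le _) (mem_univ j))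
  rw [← inv_eq_iff_eq_inv, inv_theta_eq hsum, sum_congr rfl fun j _ ↦ inv_theta_eq (hm j),
    sum_sub_distrib, ← sum_div]
  push_cast
  exact sub_right_inj

lemma thetaDefect_sum_lt_of_odd (hcard : 1 < Fintype.card ι) {m : ι → ℕ} (hm : ∀ j, 0 < m j)
    {i : ι} (hi : Odd (m i)) : thetaDefect (∑ j, m j) < ∑ j, thetaDefect (m j) := by
  obtain ⟨j, hji⟩ := Fintype.exists_ne_of_one_lt_card hcard i
  calc thetaDefect (∑ j, m j)
      < thetaDefect (m i) :=
        thetaDefect_lt_of_odd_of_lt hi <|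
          single_lt_sum hji (mem_univ i) (mem_univ j) (hm j) fun k _ _ ↦ Nat.zero_le _
    _ ≤ ∑ j, thetaDefect (m j) :=
        single_le_sum (fun k _ ↦ thetaDefect_nonneg (m k)) (mem_univ i)

theorem stmt_5 (l : ℕ) (hl : 1 < l) (m : Fin l → ℕ) (hm : ∀ j, 1 < m j) :
    theta (∑ j, m j) = (∑ j, (theta (m j))⁻¹)⁻¹ ↔ ∀ j, Even (m j) := by
  have : Nonempty (Fin l) := ⟨⟨0, by omega⟩⟩
  rw [theta_sum_eq_iff_thetaDefect_sum_eq hm]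
  constructor
  · intro h j
    by_contra hj
    have hcard : 1 < Fintype.card (Fin l) := by simpa using hl
    exact (thetaDefect_sum_lt_of_odd hcard (fun k ↦ Nat.zero_lt_of_lt (hm k))
      (Nat.not_even_iff_odd.mp hj)).ne h
  · intro h
    rw [thetaDefect_of_even (even_sum _ fun j _ ↦ h j)]
    simp [thetaDefect_of_even (h _)]
end
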